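/- arXiv:1903.01825 — 4 statements merged into one kernel-verified Lean document; each statement's English description precedes it below -/
import Mathlib

section
/- Lemma (crucial star lemma, part (b)): Let τ be a tree on {1,...,m+r}, k a cloud (k > m), s, s' distinct stars (≤ m) with {s,s'} ∉ E(τ). If {k,s} ∈ E(τ) and {k,s'} ∈ E'(τ), then {s,s'} ∈ E'(τ). -/
/-!
Every edge on the `τ`-path from `s` to `s'` has larger endpoint at least `k`, while both endpoints
of `{s, s'}` are below `k`. Indeed, prepending the edge `{s, k}` to the `τ`-path from `k` to `s'`
gives a walk from `s` to `s'`; since `τ` is acyclic, the path from `s` to `s'` only uses edges of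
that walk, and every edge of the `k`–`s'` path is `≺`-smaller than `{k, s'}`, so it has larger
endpoint at least `k`.
-/

/-- The larger endpoint of an edge (an unordered pair). -/
def esup {n : ℕ} (e : Sym2 (Fin n)) : Fin n :=
  Sym2.lift ⟨fun a b => max a b, fun a b => max_comm a b⟩ e

/-- The smaller endpoint of an edge (an unordered pair). -/
def einf {n : ℕ} (e : Sym2 (Fin n)) : Fin n :=
  Sym2.lift ⟨fun a b => min a b, fun a b => min_comm a b⟩ e

/-- The total order ≺ on edges: `{i,j} ≺ {i',j'}` (with `i<j`, `i'<j'`) iff `j' < j`,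
or `j = j'` and `i' < i`. -/
def eprec {n : ℕ} (e e' : Sym2 (Fin n)) : Prop :=
  esup e' < esup e ∨ (esup e = esup e' ∧ einf e' < einf e)

@[simp]
lemma esup_mk {n : ℕ} (a b : Fin n) : esup s(a, b) = max a b := rfl

lemma esup_le_of_eprec {n : ℕ} {e f : Sym2 (Fin n)} (h : eprec e f) : esup f ≤ esup e := by
  rcases h with h | ⟨h, _⟩
  · exact h.le
  · exact h.ge

lemma eprec_of_esup_lt {n : ℕ} {e f : Sym2 (Fin n)} (h : esup f < esup e) : eprec e f :=
  Or.inl h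

namespace SimpleGraph

variable {V : Type*} [DecidableEq V] {G : SimpleGraph V}

lemma IsAcyclic.edges_subset_of_isPath (hG : G.IsAcyclic) {u v : V} {p : G.Walk u v}
    (hp : p.IsPath) (w : G.Walk u v) : p.edges ⊆ w.edges := by
  have hpw : (⟨p, hp⟩ : G.Path u v) = ⟨w.bypass, w.bypass_isPath⟩ :=
    (hG.subsingleton_path u v).elim _ _
  rw [Subtype.mk.injEq] at hpw
  exact hpw ▸ w.edges_bypass_subset_edges

end SimpleGraph

theorem stmt9_general (m r : ℕ) (τ : SimpleGraph (Fin (m + r))) (hτ : τ.IsTree)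
    (k s s' : Fin (m + r)) (hk : m ≤ (k : ℕ)) (hs : (s : ℕ) < m) (hs' : (s' : ℕ) < m)
    (hks : τ.Adj k s)
    (hks'2 : ∀ p : τ.Walk k s', p.IsPath → ∀ e ∈ p.edges, eprec e s(k, s')) :
    ∀ p : τ.Walk s s', p.IsPath → ∀ e ∈ p.edges, eprec e s(s, s') := by
  intro p hp e he
  have hsk : s < k := Fin.lt_def.mpr (by omega)
  have hs'k : s' < k := Fin.lt_def.mpr (by omega)
  obtain ⟨q, hq, -⟩ := hτ.existsUnique_path k s'
  have hk_le : k ≤ esup e := by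
    have he' := hτ.isAcyclic.edges_subset_of_isPath hp (.cons hks.symm q) he
    rcases List.mem_cons.mp he' with rfl | heq
    · simp [hsk.le]
    · simpa [hs'k.le] using esup_le_of_eprec (hks'2 q hq e heq)
  exact eprec_of_esup_lt (lt_of_lt_of_le (by simpa using ⟨hsk, hs'k⟩) hk_le)

/-- Crucial star lemma, part (b): if `{k,s} ∈ E(τ)` and `{k,s'} ∈ E'(τ)` with `k` a cloud and
`s, s'` distinct stars not directly linked in `τ`, then `{s,s'} ∈ E'(τ)`. -/
theorem stmt9 (m r : ℕ) (τ : SimpleGraph (Fin (m + r))) (hτ : τ.IsTree)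
    (k s s' : Fin (m + r)) (hk : m ≤ (k : ℕ)) (hs : (s : ℕ) < m) (hs' : (s' : ℕ) < m)
    (hne : s ≠ s') (hss' : ¬ τ.Adj s s')
    (hks : τ.Adj k s)
    (hks'1 : ¬ τ.Adj k s')
    (hks'2 : ∀ p : τ.Walk k s', p.IsPath → ∀ e ∈ p.edges, eprec e s(k, s')) :
    ∀ p : τ.Walk s s', p.IsPath → ∀ e ∈ p.edges, eprec e s(s, s') :=
  stmt9_general m r τ hτ k s s' hk hs hs' hks hks'2
end

section
/- The map τ ↦ [τ, R(τ)] is a tree partition scheme: the intervals [τ, R(τ)] := {γ connected graph on {1,...,n} : E(τ) ⊆ E(γ) ⊆ E(τ) ∪ E'(τ)}, for τ ranging over spanning trees on {1,...,n}, form a partition of the set of connected graphs on {1,...,n}. The tree associated to a connected graph γ is obtained by Kruskal's algorithm with respect to the total edge order ≺. -/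
/-- `E'(τ)`: the set of non-tree edges `{i,j}` such that every edge on the unique `τ`-path
from `i` to `j` is ≺-smaller than `{i,j}`. -/
def Eprime {n : ℕ} (τ : SimpleGraph (Fin n)) : Set (Sym2 (Fin n)) :=
  {e | e ∉ τ.edgeSet ∧ ∀ i j : Fin n, e = s(i, j) →
      ∀ p : τ.Walk i j, p.IsPath → ∀ e' ∈ p.edges, eprec e' e}

open Function

namespace SimpleGraph

variable {V α : Type*}

theorem Reachable.of_forall_adj {G H : SimpleGraph V} (h : ∀ ⦃a b⦄, G.Adj a b → H.Reachable a b)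
    {u v : V} (huv : G.Reachable u v) : H.Reachable u v := by
  rw [reachable_iff_reflTransGen] at huv
  induction huv with
  | refl => rfl
  | tail _ hbc ih => exact ih.trans (h hbc)

theorem IsAcyclic.reachable_deleteEdges_iff {T : SimpleGraph V} (hT : T.IsAcyclic)
    {s : Set (Sym2 V)} {a b : V} {p : T.Walk a b} (hp : p.IsPath) :
    (T.deleteEdges s).Reachable a b ↔ ∀ e ∈ p.edges, e ∉ s := by
  refine ⟨fun hab => ?_, fun h => ⟨p.toDeleteEdges s h⟩⟩
  obtain ⟨q, hq⟩ := hab.exists_isPath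
  have hpq : p = q.mapLe (deleteEdges_le s) :=
    congrArg Subtype.val ((hT.subsingleton_path a b).elim ⟨p, hp⟩ ⟨_, hq.mapLe _⟩)
  intro e he
  rw [hpq, Walk.edges_mapLe_eq_edges] at he
  exact ((edgeSet_deleteEdges s) ▸ q.edges_subset_edgeSet he).2

variable [LinearOrder α] (w : Sym2 V → α)

def sublevel (G : SimpleGraph V) (c : α) : SimpleGraph V := G.deleteEdges {e | c ≤ w e}

/-- An edge of `G` is kept iff its endpoints are not joined in `G` by strictly lighter edges. For
injective weights this is the cycle characterisation of the tree built by Kruskal's algorithm. -/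
def kruskal (G : SimpleGraph V) : SimpleGraph V where
  Adj a b := G.Adj a b ∧ ¬(G.sublevel w (w s(a, b))).Reachable a b
  symm := ⟨fun a b h => ⟨h.1.symm, by rw [Sym2.eq_swap, reachable_comm]; exact h.2⟩⟩
  loopless := ⟨fun a h => G.loopless.irrefl a h.1⟩

variable {w} {G T : SimpleGraph V}

@[simp]
theorem sublevel_adj {c : α} {a b : V} :
    (G.sublevel w c).Adj a b ↔ G.Adj a b ∧ w s(a, b) < c := by
  simp [sublevel]

theorem sublevel_le (c : α) : G.sublevel w c ≤ G := deleteEdges_le _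

theorem sublevel_mono (hGT : G ≤ T) {c d : α} (hcd : c ≤ d) : G.sublevel w c ≤ T.sublevel w d :=
  fun _ _ h => sublevel_adj.2 ⟨hGT (sublevel_adj.1 h).1, (sublevel_adj.1 h).2.trans_le hcd⟩

theorem IsAcyclic.reachable_sublevel_iff (hT : T.IsAcyclic) {c : α} {a b : V} {p : T.Walk a b}
    (hp : p.IsPath) : (T.sublevel w c).Reachable a b ↔ ∀ e ∈ p.edges, w e < c := by
  simp only [sublevel, hT.reachable_deleteEdges_iff hp, Set.mem_ofPred_eq, not_le]

@[simp]
theorem kruskal_adj {a b : V} :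
    (G.kruskal w).Adj a b ↔ G.Adj a b ∧ ¬(G.sublevel w (w s(a, b))).Reachable a b :=
  Iff.rfl

theorem kruskal_le : G.kruskal w ≤ G := fun _ _ h => h.1

theorem reachable_sublevel_of_forall_not_adj [WellFoundedLT α]
    (hT : ∀ ⦃a b⦄, G.Adj a b → ¬T.Adj a b → (G.sublevel w (w s(a, b))).Reachable a b)
    (c : α) {u v : V} (huv : (G.sublevel w c).Reachable u v) : (T.sublevel w c).Reachable u v := by
  induction c using WellFoundedLT.induction generalizing u v with
  | _ c ih =>
  refine huv.of_forall_adj fun a b hab => ?_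
  rw [sublevel_adj] at hab
  by_cases hTab : T.Adj a b
  · exact (sublevel_adj.2 ⟨hTab, hab.2⟩).reachable
  · exact (ih _ hab.2 (hT hab.1 hTab)).mono (sublevel_mono le_rfl hab.2.le)

theorem reachable_sublevel_kruskal_of_not_adj [WellFoundedLT α] {a b : V} (hab : G.Adj a b)
    (hK : ¬(G.kruskal w).Adj a b) : ((G.kruskal w).sublevel w (w s(a, b))).Reachable a b :=
  reachable_sublevel_of_forall_not_adj
    (fun _ _ hxy hK => not_not.1 fun h => hK (kruskal_adj.2 ⟨hxy, h⟩)) _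
    (not_not.1 fun h => hK (kruskal_adj.2 ⟨hab, h⟩))

theorem Connected.kruskal [WellFoundedLT α] (hG : G.Connected) : (G.kruskal w).Connected := by
  have := hG.nonempty
  refine ⟨fun u v => (hG.preconnected u v).of_forall_adj fun a b hab => ?_⟩
  by_cases hK : (G.kruskal w).Adj a b
  · exact hK.reachable
  · exact (reachable_sublevel_kruskal_of_not_adj hab hK).mono (sublevel_le _)

theorem isAcyclic_kruskal (hw : Injective w) : (G.kruskal w).IsAcyclic := by
  classical
  intro z c hc
  obtain ⟨f, hf, hmax⟩ := c.edges.toFinset.exists_max_image w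
    ⟨_, List.mem_toFinset.2 (Walk.mk_start_snd_mem_edges hc.not_nil)⟩
  rw [List.mem_toFinset] at hf
  induction f using Sym2.ind with | _ u v => ?_
  have huv := c.adj_of_mem_edges hf
  refine (kruskal_adj.1 huv).2 ?_
  let C : SimpleGraph V := fromEdgeSet {e | e ∈ c.edges}
  have hcC : ∀ e ∈ c.edges, e ∈ C.edgeSet := fun e he => by
    simpa [C, he] using not_isDiag_of_mem_edgeSet _ (c.edges_subset_edgeSet he)
  have hreach : (C.deleteEdges {s(u, v)}).Reachable u v :=
    (adj_and_reachable_delete_edges_iff_exists_cycle.2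
      ⟨z, c.transfer C hcC, hc.transfer hcC, by rwa [Walk.edges_transfer]⟩).2
  refine hreach.mono fun x y hxy => ?_
  simp only [deleteEdges_adj, Set.mem_singleton_iff] at hxy
  exact sublevel_adj.2 ⟨(kruskal_adj.1 (c.adj_of_mem_edges hxy.1.1)).1,
    (hmax _ (List.mem_toFinset.2 hxy.1.1)).lt_of_ne (hw.ne hxy.2)⟩

theorem le_kruskal [WellFoundedLT α] (hT : T.IsAcyclic) (hTG : T ≤ G)
    (hbypass : ∀ ⦃a b⦄, G.Adj a b → ¬T.Adj a b → (G.sublevel w (w s(a, b))).Reachable a b) :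
    T ≤ G.kruskal w := by
  intro a b hab
  refine kruskal_adj.2 ⟨hTG hab, fun hreach => ?_⟩
  refine isBridge_iff.1 (isAcyclic_iff_forall_adj_isBridge.1 hT hab) ?_
  refine (reachable_sublevel_of_forall_not_adj hbypass _ hreach).mono fun x y hxy => ?_
  rw [sublevel_adj] at hxy
  exact deleteEdges_adj.2 ⟨hxy.1, fun h => hxy.2.ne (congrArg w h)⟩

end SimpleGraph

open SimpleGraph

def edgeKey {n : ℕ} (e : Sym2 (Fin n)) : (Fin n ×ₗ Fin n)ᵒᵈ :=
  OrderDual.toDual (toLex (esup e, einf e))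

theorem eprec_iff_edgeKey_lt {n : ℕ} {f e : Sym2 (Fin n)} : eprec f e ↔ edgeKey f < edgeKey e := by
  simp only [edgeKey, eprec, OrderDual.toDual_lt_toDual, Prod.Lex.toLex_lt_toLex, eq_comm]

theorem edgeKey_injective {n : ℕ} : Injective (edgeKey (n := n)) := by
  intro f e h
  simp only [edgeKey, OrderDual.toDual_inj, toLex_inj, Prod.mk.injEq] at h
  refine Sym2.sortEquiv.injective (Subtype.ext ?_)
  induction f using Sym2.ind
  induction e using Sym2.ind
  exact Prod.ext h.2 h.1

theorem mem_Eprime_iff {n : ℕ} {τ : SimpleGraph (Fin n)} (hτ : τ.IsTree) {a b : Fin n} :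
    s(a, b) ∈ Eprime τ ↔ ¬τ.Adj a b ∧ (τ.sublevel edgeKey (edgeKey s(a, b))).Reachable a b := by
  have hpath {i j : Fin n} {p : τ.Walk i j} (hp : p.IsPath) :
      (τ.sublevel edgeKey (edgeKey s(a, b))).Reachable i j ↔ ∀ e ∈ p.edges, eprec e s(a, b) := by
    simp only [hτ.isAcyclic.reachable_sublevel_iff hp, eprec_iff_edgeKey_lt]
  constructor
  · rintro ⟨hab, hprec⟩
    obtain ⟨p, hp⟩ := hτ.connected.exists_isPath a b
    exact ⟨hab, (hpath hp).2 (hprec a b rfl p hp)⟩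
  · rintro ⟨hab, hreach⟩
    refine ⟨hab, fun i j hij p hp => (hpath hp).1 ?_⟩
    rcases Sym2.eq_iff.1 hij with ⟨rfl, rfl⟩ | ⟨rfl, rfl⟩
    exacts [hreach, hreach.symm]

/-- The map `τ ↦ [τ, R(τ)]` is a tree partition scheme: every connected graph `γ` on
`{1,…,n}` lies in exactly one interval `[τ, R(τ)] = {γ : E(τ) ⊆ E(γ) ⊆ E(τ) ∪ E'(τ)}`
with `τ` a spanning tree. -/
theorem stmt11 (n : ℕ) (γ : SimpleGraph (Fin n)) (hγ : γ.Connected) :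
    ∃! τ : SimpleGraph (Fin n), τ.IsTree ∧ τ ≤ γ ∧
      ∀ e ∈ γ.edgeSet, e ∈ τ.edgeSet ∨ e ∈ Eprime τ := by
  have hK : (γ.kruskal edgeKey).IsTree := ⟨hγ.kruskal, isAcyclic_kruskal edgeKey_injective⟩
  refine ⟨γ.kruskal edgeKey, ⟨hK, kruskal_le, ?_⟩, ?_⟩
  · intro e he
    induction e using Sym2.ind with | _ a b => ?_
    by_cases hab : (γ.kruskal edgeKey).Adj a b
    · exact Or.inl hab
    · exact Or.inr ((mem_Eprime_iff hK).2 ⟨hab, reachable_sublevel_kruskal_of_not_adj he hab⟩)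
  · rintro τ ⟨hτ, hτγ, hcover⟩
    have hbypass : ∀ ⦃a b⦄, γ.Adj a b → ¬τ.Adj a b →
        (γ.sublevel edgeKey (edgeKey s(a, b))).Reachable a b := fun a b hab hτab =>
      (((mem_Eprime_iff hτ).1 ((hcover _ hab).resolve_left hτab)).2).mono (sublevel_mono hτγ le_rfl)
    exact ((isTree_iff_maximal_isAcyclic.1 hτ).2.eq_of_ge hK.isAcyclic
      (le_kruskal hτ.isAcyclic hτγ hbypass)).symm
end

section
/- In ℝ^3, for 0 < r < R and two points x, y at distance exactly 2R, the volume of the overlap of depletion layers |B(x,R+r) ∩ B(y,R+r)| equals V_ov = (2π/3) r^2 (3R + 2r). -/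
/-!
Lebesgue measure is invariant under isometries of `ℝ³`, so the volume of `B(x, ρ) ∩ B(y, ρ)`
depends only on `dist x y`, and we may take the centres to be `∓R e₀`. Slicing perpendicular
to `e₀`, the slice at height `t` is the open disc of squared radius `(R + r)² - (|t| + R)²`,
which is nonempty exactly for `|t| < r`. Cavalieri's principle then gives the volume as
`∫_{-r}^{r} π ((R + r)² - (|t| + R)²) dt = (2π/3) r² (3R + 2r)`.
-/

open MeasureTheory Metric Set

theorem MeasureTheory.MeasurePreserving.measure_ball_inter_ball {X Y : Type*}
    [PseudoMetricSpace X] [MeasurableSpace X] [OpensMeasurableSpace X]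
    [PseudoMetricSpace Y] [MeasurableSpace Y] [OpensMeasurableSpace Y]
    {μ : Measure X} {ν : Measure Y} {φ : X → Y} (hφ : MeasurePreserving φ μ ν)
    (hiso : Isometry φ) (a b : X) (ρ : ℝ) :
    ν (ball (φ a) ρ ∩ ball (φ b) ρ) = μ (ball a ρ ∩ ball b ρ) := by
  rw [← hφ.measure_preimage (measurableSet_ball.inter measurableSet_ball).nullMeasurableSet,
    preimage_inter, hiso.preimage_ball, hiso.preimage_ball]

theorem volume_ball_inter_ball_eq_of_dist_eq {E : Type*} [NormedAddCommGroup E]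
    [InnerProductSpace ℝ E] [FiniteDimensional ℝ E] [MeasurableSpace E] [BorelSpace E]
    {x y x' y' : E} (h : dist x y = dist x' y') (ρ : ℝ) :
    volume (ball x ρ ∩ ball y ρ) = volume (ball x' ρ ∩ ball y' ρ) := by
  have translate (a b : E) :
      volume (ball a ρ ∩ ball b ρ) = volume (ball 0 ρ ∩ ball (b - a) ρ) := by
    simpa using (measurePreserving_add_right volume a).measure_ball_inter_ball
      (isometry_add_right a) 0 (b - a) ρ
  have hnorm : ‖y - x‖ = ‖y' - x'‖ := by
    rwa [← dist_eq_norm, ← dist_eq_norm, dist_comm, dist_comm y']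
  set f := Submodule.reflection (ℝ ∙ (y - x - (y' - x')))ᗮ
  have reflect := f.measurePreserving.measure_ball_inter_ball f.isometry 0 (y - x) ρ
  rw [map_zero, Submodule.reflection_sub hnorm] at reflect
  rw [translate x y, translate x' y', reflect]

theorem volume_eq_lintegral_volume_cons {n : ℕ} {s : Set (Fin (n + 1) → ℝ)}
    (hs : MeasurableSet s) :
    volume s = ∫⁻ t, volume {q : Fin n → ℝ | Fin.cons t q ∈ s} := by
  have hψ := (volume_preserving_piFinSuccAbove (fun _ : Fin (n + 1) => ℝ) 0).symm
  rw [← hψ.measure_preimage hs.nullMeasurableSet, Measure.volume_eq_prod,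
    Measure.prod_apply (hψ.measurable hs)]
  congr! with t
  ext q
  simp only [mem_preimage, MeasurableEquiv.piFinSuccAbove_symm_apply, Fin.insertNthEquiv_zero]
  rfl

theorem volume_sq_add_sq_lt (c : ℝ) :
    volume {q : Fin 2 → ℝ | q 0 ^ 2 + q 1 ^ 2 < c} = ENNReal.ofReal (Real.pi * c) := by
  have hdisc : {q : Fin 2 → ℝ | q 0 ^ 2 + q 1 ^ 2 < c}
      = WithLp.toLp 2 ⁻¹' ball (0 : EuclideanSpace ℝ (Fin 2)) √c := by
    ext q
    simp [Real.lt_sqrt (norm_nonneg _), EuclideanSpace.norm_sq_eq, Fin.sum_univ_two]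
  rw [hdisc, (PiLp.volume_preserving_toLp (Fin 2)).measure_preimage
    measurableSet_ball.nullMeasurableSet, EuclideanSpace.volume_ball_fin_two]
  rcases le_total c 0 with hc | hc
  · simp [Real.sqrt_eq_zero'.mpr hc,
      ENNReal.ofReal_of_nonpos (mul_nonpos_of_nonneg_of_nonpos Real.pi_pos.le hc)]
  · rw [← ENNReal.ofReal_pow (Real.sqrt_nonneg c), Real.sq_sqrt hc, ← ENNReal.ofReal_mul hc,
      mul_comm]

theorem integral_neg_self_eq_two_mul_of_even {f : ℝ → ℝ} (hf : Continuous f)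
    (heven : ∀ t, f (-t) = f t) (a : ℝ) :
    ∫ t in -a..a, f t = 2 * ∫ t in 0..a, f t := by
  have hneg : ∫ t in -a..0, f t = ∫ t in 0..a, f t := by
    simpa [heven] using (intervalIntegral.integral_comp_neg (a := 0) (b := a) f).symm
  rw [← intervalIntegral.integral_add_adjacent_intervals (b := 0) (hf.intervalIntegrable _ _)
    (hf.intervalIntegrable _ _), hneg, two_mul]

theorem lintegral_ofReal_eq_ofReal_intervalIntegral {f : ℝ → ℝ} {a b : ℝ} (hab : a ≤ b)
    (hf : ContinuousOn f (Icc a b)) (hin : ∀ t ∈ Icc a b, 0 ≤ f t)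
    (hout : ∀ t ∉ Icc a b, f t ≤ 0) :
    ∫⁻ t, ENNReal.ofReal (f t) = ENNReal.ofReal (∫ t in a..b, f t) := by
  have hsupp : Function.support (fun t => ENNReal.ofReal (f t)) ⊆ Icc a b := fun t ht => by
    by_contra h
    exact ht (ENNReal.ofReal_of_nonpos (hout t h))
  rw [← setLIntegral_eq_of_support_subset hsupp, ← ofReal_integral_eq_lintegral_ofReal
    hf.integrableOn_Icc (ae_restrict_of_forall_mem measurableSet_Icc hin),
    intervalIntegral.integral_of_le hab, integral_Icc_eq_integral_Ioc]

theorem add_sq_add_lt_and_sub_sq_add_lt_iff {R : ℝ} (hR : 0 ≤ R) (t s c : ℝ) :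
    (t + R) ^ 2 + s < c ∧ (t - R) ^ 2 + s < c ↔ s < c - (|t| + R) ^ 2 := by
  rcases le_total 0 t with ht | ht
  · rw [abs_of_nonneg ht]
    constructor
    · rintro ⟨h, -⟩; linarith
    · intro h; constructor <;> nlinarith
  · rw [abs_of_nonpos ht]
    constructor
    · rintro ⟨-, h⟩; nlinarith
    · intro h; constructor <;> nlinarith

theorem toLp_cons_mem_ball_inter_ball_iff {R ρ : ℝ} (hR : 0 ≤ R) (hρ : 0 < ρ) (t : ℝ)
    (q : Fin 2 → ℝ) :
    WithLp.toLp 2 (Fin.cons t q : Fin 3 → ℝ) ∈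
        ball (-EuclideanSpace.single 0 R) ρ ∩ ball (EuclideanSpace.single 0 R) ρ ↔
      q 0 ^ 2 + q 1 ^ 2 < ρ ^ 2 - (|t| + R) ^ 2 := by
  simp only [mem_inter_iff, mem_ball, EuclideanSpace.dist_eq, Real.sqrt_lt' hρ]
  simpa [Fin.sum_univ_succ, Real.dist_eq, sq_abs] using
    add_sq_add_lt_and_sub_sq_add_lt_iff hR t (q 0 ^ 2 + q 1 ^ 2) (ρ ^ 2)

theorem integral_pi_mul_sq_sub_abs_add_sq (R : ℝ) {r : ℝ} (hr : 0 ≤ r) :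
    ∫ t in -r..r, Real.pi * ((R + r) ^ 2 - (|t| + R) ^ 2)
      = 2 * Real.pi / 3 * r ^ 2 * (3 * R + 2 * r) := by
  rw [integral_neg_self_eq_two_mul_of_even (by fun_prop) (fun t => by rw [abs_neg])]
  have habs : ∫ t in (0 : ℝ)..r, Real.pi * ((R + r) ^ 2 - (|t| + R) ^ 2)
      = ∫ t in (0 : ℝ)..r, Real.pi * ((R + r) ^ 2 - (t + R) ^ 2) := by
    refine intervalIntegral.integral_congr fun t ht => ?_
    rw [uIcc_of_le hr] at ht
    simp only [abs_of_nonneg ht.1]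
  have hi : IntervalIntegrable (fun t : ℝ => (t + R) ^ 2) volume 0 r :=
    (by fun_prop : Continuous fun t : ℝ => (t + R) ^ 2).intervalIntegrable _ _
  rw [habs, intervalIntegral.integral_const_mul,
    intervalIntegral.integral_sub intervalIntegrable_const hi,
    intervalIntegral.integral_comp_add_right (· ^ 2), integral_pow, intervalIntegral.integral_const]
  simp only [zero_add, sub_zero, smul_eq_mul]
  ring

theorem volume_ball_neg_single_inter_ball_single {R r : ℝ} (hR : 0 ≤ R) (hr : 0 < r) :
    volume (ball (-EuclideanSpace.single 0 R : EuclideanSpace ℝ (Fin 3)) (R + r) ∩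
        ball (EuclideanSpace.single 0 R) (R + r))
      = ENNReal.ofReal (2 * Real.pi / 3 * r ^ 2 * (3 * R + 2 * r)) := by
  set S := ball (-EuclideanSpace.single 0 R : EuclideanSpace ℝ (Fin 3)) (R + r) ∩
    ball (EuclideanSpace.single 0 R) (R + r)
  have hS : MeasurableSet S := measurableSet_ball.inter measurableSet_ball
  have hmp := PiLp.volume_preserving_toLp (Fin 3)
  have hslice (t : ℝ) : {q : Fin 2 → ℝ | Fin.cons t q ∈ WithLp.toLp 2 ⁻¹' S}
      = {q | q 0 ^ 2 + q 1 ^ 2 < (R + r) ^ 2 - (|t| + R) ^ 2} :=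
    ext (toLp_cons_mem_ball_inter_ball_iff hR (by positivity) t)
  have hin (t : ℝ) (ht : t ∈ Icc (-r) r) : 0 ≤ Real.pi * ((R + r) ^ 2 - (|t| + R) ^ 2) := by
    have : |t| ≤ r := abs_le.mpr ht
    exact mul_nonneg Real.pi_pos.le (by nlinarith [abs_nonneg t])
  have hout (t : ℝ) (ht : t ∉ Icc (-r) r) : Real.pi * ((R + r) ^ 2 - (|t| + R) ^ 2) ≤ 0 := by
    have : r < |t| := not_le.mp (mt abs_le.mp ht)
    exact mul_nonpos_of_nonneg_of_nonpos Real.pi_pos.le (by nlinarith [abs_nonneg t])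
  rw [← hmp.measure_preimage hS.nullMeasurableSet,
    volume_eq_lintegral_volume_cons (hmp.measurable hS)]
  simp_rw [hslice, volume_sq_add_sq_lt]
  rw [lintegral_ofReal_eq_ofReal_intervalIntegral (by linarith) (by fun_prop) hin hout,
    integral_pi_mul_sq_sub_abs_add_sq R hr.le]

theorem stmt16_general (r R : ℝ) (hr : 0 < r)
    (x y : EuclideanSpace ℝ (Fin 3)) (hxy : dist x y = 2 * R) :
    (volume (ball x (R + r) ∩ ball y (R + r))).toReal
      = (2 * Real.pi / 3) * r ^ 2 * (3 * R + 2 * r) := by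
  have hR : 0 ≤ R := by linarith [dist_nonneg (x := x) (y := y)]
  have hdist : dist x y = dist (-EuclideanSpace.single 0 R : EuclideanSpace ℝ (Fin 3))
      (EuclideanSpace.single 0 R) := by
    rw [hxy, dist_eq_norm, ← neg_add', norm_neg, ← two_smul ℝ, norm_smul]
    simp [abs_of_nonneg hR]
  rw [volume_ball_inter_ball_eq_of_dist_eq hdist, volume_ball_neg_single_inter_ball_single hR hr,
    ENNReal.toReal_ofReal (by positivity)]

theorem stmt16 (r R : ℝ) (hr : 0 < r) (hrR : r < R)
    (x y : EuclideanSpace ℝ (Fin 3)) (hxy : dist x y = 2 * R) :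
    (volume (ball x (R + r) ∩ ball y (R + r))).toReal
      = (2 * Real.pi / 3) * r ^ 2 * (3 * R + 2 * r) :=
  stmt16_general r R hr x y hxy
end

section
/- Connectivity transfer for touching hard-sphere clouds: let 0 < r < R, let y_1,...,y_n ∈ ℝ^d be such that the graph on {1,...,n} with edges {i,j} whenever |y_i - y_j| < 2r is connected, and let x_1, x_2 ∈ ℝ^d with |x_1 - x_2| ≥ 2R. If there exist indices j_1, j_2 with |x_1 - y_{j_1}| < R + r and |x_2 - y_{j_2}| < R + r, then there exists an index j with R - r ≤ |x_1 - y_j| < R + r. -/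
/-!
Along a walk in the graph the distance to `x₁` grows by less than `2r` per step, so it cannot
jump over the corona, which has width `2r`: it starts below `R + r` at `y j₁` and ends at
least at `R - r` at `y j₂`, because `y j₂` lies within `R + r` of `x₂` while `x₂` is at
least `2R` away from `x₁`.
-/

theorem SimpleGraph.Reachable.exists_mem_Ico {V α : Type*} [AddCommGroup α] [LinearOrder α]
    [IsOrderedAddMonoid α] {G : SimpleGraph V} {f : V → α} {a b : α} {u v : V}
    (h : G.Reachable u v) (hstep : ∀ i j, G.Adj i j → f j ≤ f i + (b - a))
    (hu : f u < b) (hv : a ≤ f v) : ∃ w, f w ∈ Set.Ico a b := by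
  obtain ⟨p⟩ := h
  induction p with
  | nil => exact ⟨_, hv, hu⟩
  | @cons i j _ hij _ ih =>
    by_cases hi : a ≤ f i
    · exact ⟨i, hi, hu⟩
    · refine ih ?_ hv
      calc f j ≤ f i + (b - a) := hstep i j hij
        _ < a + (b - a) := by gcongr; exact not_le.mp hi
        _ = b := add_sub_cancel a b

theorem stmt17_general {d n : ℕ} (r R : ℝ)
    (y : Fin n → EuclideanSpace ℝ (Fin d)) (x₁ x₂ : EuclideanSpace ℝ (Fin d))
    (hconn : (SimpleGraph.fromRel (fun i j => dist (y i) (y j) < 2 * r)).Connected)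
    (hx : 2 * R ≤ dist x₁ x₂)
    (j₁ j₂ : Fin n) (h1 : dist x₁ (y j₁) < R + r) (h2 : dist x₂ (y j₂) < R + r) :
    ∃ j, R - r ≤ dist x₁ (y j) ∧ dist x₁ (y j) < R + r := by
  have hfar : R - r ≤ dist x₁ (y j₂) := by
    linarith [dist_triangle x₁ (y j₂) x₂, dist_comm (y j₂) x₂]
  have hstep : ∀ i j, (SimpleGraph.fromRel (fun i j => dist (y i) (y j) < 2 * r)).Adj i j →
      dist x₁ (y j) ≤ dist x₁ (y i) + (R + r - (R - r)) := by
    rintro i j ⟨-, hij | hji⟩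
    · linarith [dist_triangle x₁ (y i) (y j)]
    · linarith [dist_triangle x₁ (y i) (y j), dist_comm (y i) (y j)]
  exact (hconn.preconnected j₁ j₂).exists_mem_Ico hstep h1 hfar

/-- Connectivity transfer for touching hard-sphere clouds: a connected chain of small
spheres of radius `r` touching two non-overlapping large spheres of radius `R` must have a
point in the corona `{y : R - r ≤ |x₁ - y| < R + r}` of the first large sphere. -/
theorem stmt17 {d n : ℕ} (r R : ℝ) (hr : 0 < r) (hrR : r < R)
    (y : Fin n → EuclideanSpace ℝ (Fin d)) (x₁ x₂ : EuclideanSpace ℝ (Fin d))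
    (hconn : (SimpleGraph.fromRel (fun i j => dist (y i) (y j) < 2 * r)).Connected)
    (hx : 2 * R ≤ dist x₁ x₂)
    (j₁ j₂ : Fin n) (h1 : dist x₁ (y j₁) < R + r) (h2 : dist x₂ (y j₂) < R + r) :
    ∃ j, R - r ≤ dist x₁ (y j) ∧ dist x₁ (y j) < R + r :=
  stmt17_general r R y x₁ x₂ hconn hx j₁ j₂ h1 h2
end
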